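/- arXiv:1203.2815 — 6 statements merged into one kernel-verified Lean document; each statement's English description precedes it below -/
import Mathlib

section
/- Let F be the free abelian monoid on generators a_1,...,a_n, and let x = Σ r_i a_i and y = Σ s_i a_i be nonzero elements of F. Let M = F/∼ where ∼ is the congruence generated by the single relation (x,y). Then M contains an element m admitting c ≠ 0 with m = m + c (an 'infinite' element) if and only if x < y or y < x in the componentwise partial order on F. -/
private lemma relA {n : ℕ} {x y : Fin n → ℕ} {a b : Fin n → ℕ}
    (h : AddConGen.Rel (fun a b : Fin n → ℕ => a = x ∧ b = y) a b) :
    ∃ k : ℤ, ∀ i, (b i : ℤ) = (a i : ℤ) + k * ((y i : ℤ) - (x i : ℤ)) := by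
  induction h with
  | of a b hab =>
      exact ⟨1, fun i => by simp [hab.1, hab.2]⟩
  | refl a => exact ⟨0, fun i => by simp⟩
  | symm _ ih =>
      obtain ⟨k, hk⟩ := ih
      exact ⟨-k, fun i => by have := hk i; push_cast at this ⊢; linarith⟩
  | trans _ _ ih1 ih2 =>
      obtain ⟨k1, hk1⟩ := ih1
      obtain ⟨k2, hk2⟩ := ih2
      exact ⟨k1 + k2, fun i => by have := hk1 i; have := hk2 i; push_cast at this ⊢; ring_nf; ring_nf at *; linarith⟩
  | add _ _ ih1 ih2 =>
      obtain ⟨k1, hk1⟩ := ih1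
      obtain ⟨k2, hk2⟩ := ih2
      refine ⟨k1 + k2, fun i => ?_⟩
      have h1 := hk1 i; have h2 := hk2 i
      simp only [Pi.add_apply]
      push_cast
      linarith

private lemma relB {n : ℕ} {x y : Fin n → ℕ} (hx : x ≠ 0) (hy : y ≠ 0) {a b : Fin n → ℕ}
    (h : AddConGen.Rel (fun a b : Fin n → ℕ => a = x ∧ b = y) a b) :
    (a = 0 ↔ b = 0) := by
  induction h with
  | of a b hab =>
      obtain ⟨rfl, rfl⟩ := hab
      simp [hx, hy]
  | refl a => rfl
  | symm _ ih => exact ih.symm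
  | trans _ _ ih1 ih2 => exact ih1.trans ih2
  | add _ _ ih1 ih2 =>
      rw [add_eq_zero, add_eq_zero, ih1, ih2]

/-- Let `F = ℕ^n` be the free abelian monoid on `n` generators, and let `x, y` be
nonzero elements of `F`.  Let `M = F/∼` where `∼` is the monoid congruence generated by
the single pair `(x, y)`.  Then `M` contains an element `m` admitting `c ≠ 0` with
`m = m + c` (an "infinite" element) if and only if `x < y` or `y < x` in the
componentwise partial order on `F`. -/
theorem stmt_0 (n : ℕ) (x y : Fin n → ℕ) (hx : x ≠ 0) (hy : y ≠ 0) :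
    (∃ m c : (addConGen (fun a b : Fin n → ℕ => a = x ∧ b = y)).Quotient,
        c ≠ 0 ∧ m = m + c) ↔ x < y ∨ y < x := by
  set r := fun a b : Fin n → ℕ => a = x ∧ b = y with hr
  constructor
  · rintro ⟨m, c, hc, hmc⟩
    obtain ⟨a, rfl⟩ := AddCon.mk'_surjective m
    obtain ⟨c₀, rfl⟩ := AddCon.mk'_surjective c
    have hc₀ : c₀ ≠ 0 := by
      rintro rfl
      exact hc (by simp)
    have hrel : AddConGen.Rel r a (a + c₀) := by
      have : (addConGen r) a (a + c₀) := by
        rw [← AddCon.eq]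
        simpa using hmc
      exact this
    obtain ⟨k, hk⟩ := relA hrel
    have hck : ∀ i, (c₀ i : ℤ) = k * ((y i : ℤ) - (x i : ℤ)) := by
      intro i
      have := hk i
      simp only [Pi.add_apply] at this
      push_cast at this
      linarith
    obtain ⟨i, hi⟩ := Function.ne_iff.mp hc₀
    have hi' : (c₀ i : ℤ) ≠ 0 := by exact_mod_cast hi
    have hk0 : k ≠ 0 := by
      rintro rfl
      simp [hck i] at hi'
    rcases hk0.lt_or_gt with hkneg | hkpos
    · right
      have hle : ∀ j, y j ≤ x j := by
        intro j
        by_contra hcon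
        push_neg at hcon
        have hd : (0 : ℤ) < (y j : ℤ) - x j := by
          have : (x j : ℤ) < y j := by exact_mod_cast hcon
          linarith
        have h1 := mul_neg_of_neg_of_pos hkneg hd
        have h2 : (0 : ℤ) ≤ (c₀ j : ℤ) := Int.natCast_nonneg _
        linarith [hck j]
      have hne : y ≠ x := by
        intro h0
        apply hi'
        rw [hck i, h0]
        ring
      exact lt_of_le_of_ne (fun j => hle j) hne
    · left
      have hle : ∀ j, x j ≤ y j := by
        intro j
        by_contra hcon
        push_neg at hcon
        have hd : (y j : ℤ) - x j < 0 := by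
          have : (y j : ℤ) < x j := by exact_mod_cast hcon
          linarith
        have h1 := mul_neg_of_pos_of_neg hkpos hd
        have h2 : (0 : ℤ) ≤ (c₀ j : ℤ) := Int.natCast_nonneg _
        linarith [hck j]
      have hne : x ≠ y := by
        intro h0
        apply hi'
        rw [hck i, h0]
        ring
      exact lt_of_le_of_ne (fun j => hle j) hne
  · intro h
    have hxy : AddConGen.Rel r x y := AddConGen.Rel.of _ _ ⟨rfl, rfl⟩
    rcases h with h | h
    · refine ⟨(x : _), ((y - x : Fin n → ℕ) : _), ?_, ?_⟩
      · intro h0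
        have : ((y - x : Fin n → ℕ) : (addConGen r).Quotient) = ((0 : Fin n → ℕ) : _) := by
          simpa using h0
        rw [AddCon.eq] at this
        have hne : y - x ≠ 0 := by
          intro h1
          exact h.not_ge (tsub_eq_zero_iff_le.mp h1)
        exact hne ((relB hx hy this).mpr rfl)
      · have : x + (y - x) = y := add_tsub_cancel_of_le h.le
        calc ((x : Fin n → ℕ) : (addConGen r).Quotient)
            = ((y : Fin n → ℕ) : _) := AddCon.eq _ |>.mpr hxy
          _ = ((x + (y - x) : Fin n → ℕ) : _) := by rw [this]
          _ = _ := by rfl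
    · refine ⟨(y : _), ((x - y : Fin n → ℕ) : _), ?_, ?_⟩
      · intro h0
        have : ((x - y : Fin n → ℕ) : (addConGen r).Quotient) = ((0 : Fin n → ℕ) : _) := by
          simpa using h0
        rw [AddCon.eq] at this
        have hne : x - y ≠ 0 := by
          intro h1
          exact h.not_ge (tsub_eq_zero_iff_le.mp h1)
        exact hne ((relB hx hy this).mpr rfl)
      · have : y + (x - y) = x := add_tsub_cancel_of_le h.le
        calc ((y : Fin n → ℕ) : (addConGen r).Quotient)
            = ((x : Fin n → ℕ) : _) := (AddCon.eq _ |>.mpr hxy).symm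
          _ = ((y + (x - y) : Fin n → ℕ) : _) := by rw [this]
          _ = _ := by rfl
end

section
/- Let F = ℕ^n, let x = (r_1,...,r_n) and y = (s_1,...,s_n) in F, and let ∼ be the monoid congruence generated by (x,y). If there exists a ∈ F and c ∈ F with c ≠ 0 such that a ∼ a + c, then either x < y or y < x in the componentwise order. -/
/-!
If `x` and `y` are incomparable, then `x - y` is zero or has entries of both signs, so some
weight vector `w` with all entries positive satisfies `w ⬝ᵥ x = w ⬝ᵥ y`. The additive map
`u ↦ w ⬝ᵥ u` identifies `x` and `y`, hence is constant on `∼`-classes, whereas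
`w ⬝ᵥ (a + c) = w ⬝ᵥ a + w ⬝ᵥ c > w ⬝ᵥ a`.
-/

theorem AddCon.map_eq_of_addConGen_pair {M N F : Type*} [Add M] [Add N] [FunLike F M N]
    [AddHomClass F M N] (f : F) {x y a b : M} (hxy : f x = f y)
    (h : addConGen (fun u v => u = x ∧ v = y) a b) : f a = f b :=
  (AddCon.ker_rel f).mp <| AddCon.addConGen_le.mpr (by rintro u v ⟨rfl, rfl⟩; exact hxy) h

section Weights

variable {ι : Type*} [Fintype ι]

theorem sum_tsub_pos_of_not_lt_of_lt {u v : ι → ℕ} (h : ¬ v < u) {k : ι} (hk : v k < u k) :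
    0 < ∑ j, (v j - u j) := by
  obtain ⟨j, hj⟩ : ∃ j, u j < v j := by
    have : ¬ v ≤ u := fun hle => h (Pi.lt_def.mpr ⟨hle, k, hk⟩)
    simpa [Pi.le_def] using this
  exact lt_of_lt_of_le (Nat.sub_pos_of_lt hj)
    (Finset.single_le_sum (f := fun j => v j - u j) (by simp) (Finset.mem_univ j))

theorem exists_pos_dotProduct_eq_of_not_lt {u v : ι → ℕ} (huv : ¬ u < v) (hvu : ¬ v < u) :
    ∃ w : ι → ℕ, (∀ k, 0 < w k) ∧ w ⬝ᵥ u = w ⬝ᵥ v := by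
  set P := ∑ k, (u k - v k)
  set N := ∑ k, (v k - u k)
  -- The total surplus `P` of `u` over `v`, weighted by `N`, balances the total deficit `N`,
  -- weighted by `P`.
  set w : ι → ℕ := fun k => if v k < u k then N else if u k < v k then P else 1
  refine ⟨w, fun k => ?_, ?_⟩
  · simp only [w]
    split_ifs with h₁ h₂
    · exact sum_tsub_pos_of_not_lt_of_lt hvu h₁
    · exact sum_tsub_pos_of_not_lt_of_lt huv h₂
    · exact one_pos
  · have balance : ∀ k, w k * u k + P * (v k - u k) = w k * v k + N * (u k - v k) := by
      intro k
      simp only [w]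
      split_ifs with h₁ h₂
      · rw [Nat.sub_eq_zero_of_le h₁.le, Nat.mul_sub]
        have := Nat.mul_le_mul_left N h₁.le
        omega
      · rw [Nat.sub_eq_zero_of_le h₂.le, Nat.mul_sub]
        have := Nat.mul_le_mul_left P h₂.le
        omega
      · simp [le_antisymm (not_lt.mp h₂) (not_lt.mp h₁)]
    have := Finset.sum_congr rfl fun k (_ : k ∈ Finset.univ) => balance k
    simp only [Finset.sum_add_distrib, ← Finset.mul_sum] at this
    rw [mul_comm N P] at this
    exact Nat.add_right_cancel this

theorem dotProduct_pos_of_pos_of_ne_zero {w c : ι → ℕ} (hw : ∀ k, 0 < w k) (hc : c ≠ 0) :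
    0 < w ⬝ᵥ c := by
  obtain ⟨k, hk⟩ := Function.ne_iff.mp hc
  exact lt_of_lt_of_le (Nat.mul_pos (hw k) (Nat.pos_of_ne_zero hk))
    (Finset.single_le_sum (f := fun k => w k * c k) (by simp) (Finset.mem_univ k))

end Weights

/-- Let `F = ℕ^n`, `x = (r_1,…,r_n)`, `y = (s_1,…,s_n)` in `F`, and let `∼` be the monoid
congruence generated by `(x, y)`.  If there exist `a ∈ F` and `c ∈ F` with `c ≠ 0` such
that `a ∼ a + c`, then either `x < y` or `y < x` in the componentwise order. -/
theorem stmt_3 (n : ℕ) (x y a c : Fin n → ℕ) (hc : c ≠ 0)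
    (h : addConGen (fun u v : Fin n → ℕ => u = x ∧ v = y) a (a + c)) :
    x < y ∨ y < x := by
  by_contra hxy
  obtain ⟨hxy, hyx⟩ := not_or.mp hxy
  obtain ⟨w, hw, hwxy⟩ := exists_pos_dotProduct_eq_of_not_lt hxy hyx
  let f : AddHom (Fin n → ℕ) ℕ := ⟨(w ⬝ᵥ ·), dotProduct_add w⟩
  have hac : w ⬝ᵥ a = w ⬝ᵥ a + w ⬝ᵥ c := by
    rw [← dotProduct_add]
    exact AddCon.map_eq_of_addConGen_pair f hwxy h
  have hc_pos := dotProduct_pos_of_pos_of_ne_zero hw hc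
  omega
end

section
/- Let r = (r_1,...,r_n) and s = (s_1,...,s_n) be nonzero vectors of nonnegative integers with r ≠ s and neither r < s nor s < r componentwise. Then there exist positive reals γ_1,...,γ_n, δ_1,...,δ_n with Σ γ_i = 1, Σ δ_i = 1, and (s_i+1)·δ_i = (r_i+1)·γ_i for all i. -/
/-- Let `r` and `s` be nonzero vectors of nonnegative integers with `r ≠ s` and neither
`r < s` nor `s < r` componentwise.  Then there exist positive reals `γ_1,…,γ_n`,
`δ_1,…,δ_n` with `Σ γ_i = 1`, `Σ δ_i = 1` and `(s_i+1)·δ_i = (r_i+1)·γ_i` for all `i`. -/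
theorem stmt_8 (n : ℕ) (r s : Fin n → ℕ) (hr : r ≠ 0) (hs : s ≠ 0) (hne : r ≠ s)
    (h₁ : ¬ r < s) (h₂ : ¬ s < r) :
    ∃ γ δ : Fin n → ℝ, (∀ i, 0 < γ i) ∧ (∀ i, 0 < δ i) ∧
      (∑ i, γ i = 1) ∧ (∑ i, δ i = 1) ∧
      ∀ i, ((s i : ℝ) + 1) * δ i = ((r i : ℝ) + 1) * γ i := by
  -- extract indices where r > s and r < s
  have hnle1 : ¬ r ≤ s := fun h => h₁ (lt_of_le_of_ne h hne)
  have hnle2 : ¬ s ≤ r := fun h => h₂ (lt_of_le_of_ne h hne.symm)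
  obtain ⟨i, hi⟩ : ∃ i, s i < r i := by
    by_contra h; push_neg at h; exact hnle1 (fun k => h k)
  obtain ⟨j, hj⟩ : ∃ j, r j < s j := by
    by_contra h; push_neg at h; exact hnle2 (fun k => h k)
  have hij : i ≠ j := fun h => by subst h; exact absurd hj (not_lt.mpr hi.le)
  clear hr hs hne h₁ h₂ hnle1 hnle2
  set a : Fin n → ℝ := fun k => ((r k : ℝ) + 1) / ((s k : ℝ) + 1) with ha_def
  have hspos : ∀ k, (0:ℝ) < (s k : ℝ) + 1 := fun k => by positivity
  have ha_pos : ∀ k, 0 < a k := fun k => div_pos (by positivity) (hspos k)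
  have hai : 1 < a i := by
    rw [ha_def]; rw [lt_div_iff₀ (hspos i)]
    have : (s i : ℝ) < r i := by exact_mod_cast hi
    linarith
  have haj : a j < 1 := by
    rw [ha_def]; rw [div_lt_one (hspos j)]
    have : (r j : ℝ) < s j := by exact_mod_cast hj
    linarith
  set C : ℝ := ∑ k ∈ Finset.univ \ {i, j}, (1 - a k) with hC
  set K : ℝ := (|C| + 1) / (1 - a j) with hK
  set t : ℝ := (C + |C| + 1) / (a i - 1) with ht
  have hKpos : 0 < K := div_pos (by positivity) (by linarith)
  have htpos : 0 < t := div_pos (by nlinarith [neg_abs_le C]) (by linarith)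
  set w : Fin n → ℝ := fun k => if k = i then t else if k = j then K else 1 with hw
  have hwpos : ∀ k, 0 < w k := by
    intro k; rw [hw]; dsimp only
    split_ifs <;> [exact htpos; exact hKpos; norm_num]
  set W : ℝ := ∑ k, w k with hW
  have hWpos : 0 < W := Finset.sum_pos (fun k _ => hwpos k) ⟨i, Finset.mem_univ i⟩
  -- key identity
  have hpair : ({i, j} : Finset (Fin n)) ⊆ Finset.univ := Finset.subset_univ _
  have hkey : ∑ k, (a k - 1) * w k = 0 := by
    rw [← Finset.sum_sdiff hpair]
    have h1 : ∑ k ∈ Finset.univ \ {i, j}, (a k - 1) * w k = -C := by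
      rw [hC, ← Finset.sum_neg_distrib]
      apply Finset.sum_congr rfl
      intro k hk
      simp only [Finset.mem_sdiff, Finset.mem_insert, Finset.mem_singleton] at hk
      push_neg at hk
      rw [hw]; dsimp only
      rw [if_neg hk.2.1, if_neg hk.2.2]; ring
    have h2 : ∑ k ∈ ({i, j} : Finset (Fin n)), (a k - 1) * w k = C := by
      rw [Finset.sum_pair hij]
      have hwi : w i = t := by rw [hw]; simp
      have hwj : w j = K := by rw [hw]; simp [hij.symm]
      rw [hwi, hwj, ht, hK]
      have e1 : (C + |C| + 1) / (a i - 1) * (a i - 1) = C + |C| + 1 :=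
        div_mul_cancel₀ _ (by linarith : a i - 1 ≠ 0)
      have e2 : (|C| + 1) / (1 - a j) * (1 - a j) = |C| + 1 :=
        div_mul_cancel₀ _ (by linarith : 1 - a j ≠ 0)
      linear_combination e1 - e2
    rw [h1, h2]; ring
  have hsum_aw : ∑ k, a k * w k = W := by
    have : ∑ k, (a k * w k - w k) = 0 := by
      rw [← hkey]; apply Finset.sum_congr rfl; intro k _; ring
    rw [Finset.sum_sub_distrib] at this
    rw [hW]; linarith
  refine ⟨fun k => w k / W, fun k => a k * w k / W, ?_, ?_, ?_, ?_, ?_⟩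
  · exact fun k => div_pos (hwpos k) hWpos
  · exact fun k => div_pos (mul_pos (ha_pos k) (hwpos k)) hWpos
  · rw [← Finset.sum_div, ← hW, div_self hWpos.ne']
  · rw [← Finset.sum_div, hsum_aw, div_self hWpos.ne']
  · intro k
    have : ((s k : ℝ) + 1) * a k = (r k : ℝ) + 1 := by
      simp only [ha_def]
      field_simp
    dsimp only
    rw [← this]; ring
end

section
/- Let φ be a state on a unital C*-algebra A and y ∈ A with yy* = q a projection, satisfying φ(y*x) = μ φ(xy*) for all x ∈ A with μ > 0. If d ∈ A commutes with φ in the sense that φ(da) = φ(ad) for all a ∈ A, and d ∈ qAq, then y*dy lies in the centralizer of φ: φ((y*dy)a) = φ(a(y*dy)) for all a ∈ A. -/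
open scoped ComplexOrder

/-!
Taking adjoints in the modular relation `φ(y* x) = μ φ(x y*)` (a positive functional is
hermitian) gives the dual relation `φ(x y) = μ φ(y x)`. Then
`φ(y* d y a) = μ φ(d (y a y*)) = μ φ(y (a y* d)) = φ(a y* d y)`,
moving `y*` to the right, `d` around the centralizer, and `y` back to the right.
-/

theorem LinearMap.map_star_of_nonneg_star_mul_self {A : Type*} [NonUnitalCStarAlgebra A]
    (φ : A →ₗ[ℂ] ℂ) (hφpos : ∀ a : A, 0 ≤ φ (star a * a)) (x : A) :
    φ (star x) = star (φ x) := by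
  let _ := CStarAlgebra.spectralOrder A
  have := CStarAlgebra.spectralOrderedRing A
  let ψ : A →ₚ[ℂ] ℂ := PositiveLinearMap.mk₀ φ fun b hb ↦ by
    obtain ⟨a, rfl⟩ := CStarAlgebra.nonneg_iff_eq_star_mul_self.mp hb
    exact hφpos a
  exact map_star ψ x

theorem apply_mul_eq_smul_of_apply_star_mul_eq_smul {A M R : Type*} [Mul A] [StarMul A]
    [InvolutiveStar M] [SMul R M] [Star R] [StarModule R M] (φ : A → M)
    (hφ : ∀ x, φ (star x) = star (φ x)) (c : R) (hc : IsSelfAdjoint c) (y : A)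
    (hmod : ∀ x, φ (star y * x) = c • φ (x * star y)) (x : A) :
    φ (x * y) = c • φ (y * x) := by
  calc φ (x * y) = star (φ (star y * star x)) := by rw [← hφ, star_mul, star_star, star_star]
    _ = c • star (φ (star x * star y)) := by rw [hmod, star_smul, hc.star_eq]
    _ = c • φ (y * x) := by rw [← hφ, star_mul, star_star, star_star]

theorem apply_conj_mul_comm_of_modular {A M R : Type*} [Semigroup A] [SMul R M] (φ : A → M)
    (c : R) (w y : A) (hw : ∀ x, φ (w * x) = c • φ (x * w))
    (hy : ∀ x, φ (x * y) = c • φ (y * x)) (d : A) (hd : ∀ a, φ (d * a) = φ (a * d))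
    (a : A) :
    φ (w * d * y * a) = φ (a * (w * d * y)) := by
  calc
    φ (w * d * y * a) = c • φ (d * (y * a * w)) := by
      rw [mul_assoc, mul_assoc, hw]; simp only [mul_assoc]
    _ = c • φ (y * (a * w * d)) := by rw [hd]; simp only [mul_assoc]
    _ = φ (a * (w * d * y)) := by rw [← hy]; simp only [mul_assoc]

theorem stmt_12_general {A : Type*} [CStarAlgebra A]
    (φ : A →ₗ[ℂ] ℂ) (hφpos : ∀ a : A, 0 ≤ φ (star a * a))
    (y : A)
    (mu : ℝ) (hmod : ∀ x, φ (star y * x) = mu • φ (x * star y))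
    (d : A) (hdcent : ∀ a, φ (d * a) = φ (a * d)) :
    ∀ a, φ ((star y * d * y) * a) = φ (a * (star y * d * y)) :=
  apply_conj_mul_comm_of_modular φ mu (star y) y hmod
    (apply_mul_eq_smul_of_apply_star_mul_eq_smul φ (φ.map_star_of_nonneg_star_mul_self hφpos) mu
      (.all mu) y hmod) d hdcent

/-- Let `φ` be a state on a unital C*-algebra `A` and `y ∈ A` with `yy* = q` a
projection, satisfying `φ(y*x) = μ·φ(xy*)` for all `x` with `μ > 0`.  If `d ∈ qAq`
lies in the centralizer of `φ` (i.e. `φ(da) = φ(ad)` for all `a`), then `y*dy` lies in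
the centralizer of `φ`: `φ((y*dy)a) = φ(a(y*dy))` for all `a ∈ A`. -/
theorem stmt_12 {A : Type*} [CStarAlgebra A]
    (φ : A →ₗ[ℂ] ℂ) (hφ1 : φ 1 = 1) (hφpos : ∀ a : A, 0 ≤ φ (star a * a))
    (y q : A) (hqidem : IsIdempotentElem q) (hqsa : star q = q)
    (hy : y * star y = q)
    (mu : ℝ) (hmu : 0 < mu) (hmod : ∀ x, φ (star y * x) = mu • φ (x * star y))
    (d : A) (hd : q * d * q = d) (hdcent : ∀ a, φ (d * a) = φ (a * d)) :
    ∀ a, φ ((star y * d * y) * a) = φ (a * (star y * d * y)) :=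
  stmt_12_general φ hφpos y mu hmod d hdcent
end

section
/- Let M be the commutative monoid presented by one generator a and relations a = m·a and a = n·a, where m, n ≥ 2, and let d = gcd(n−1, m−1). Then M is isomorphic to the monoid presented by one generator a and the single relation a = (d+1)·a; i.e., the congruence on ℕ generated by {(1,m),(1,n)} equals the congruence generated by (1, d+1). -/
/-!
For a congruence `c` on `ℕ` and a base point `x`, the steps `a` with `c x (x + a)` are closed
under multiples (chain the relation) and under differences (shift one relation and compare
endpoints), hence, by the Euclidean algorithm, under `gcd`.  So `1 ∼ m` and `1 ∼ n` give
`1 ∼ 1 + gcd (m - 1) (n - 1)`; conversely `1 ∼ 1 + d` gives `1 ∼ 1 + k` for every multiple `k`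
of `d`, in particular for `m - 1` and `n - 1`.
-/

namespace AddCon

theorem rel_add_nsmul {M : Type*} [AddCommMonoid M] (c : AddCon M) {x a : M}
    (h : c x (x + a)) (t : ℕ) : c x (x + t • a) := by
  induction t with
  | zero => simpa using c.refl x
  | succ t ih =>
    have shifted : c (x + t • a) (x + a + t • a) := c.add h (c.refl _)
    rw [add_right_comm, add_assoc, ← succ_nsmul] at shifted
    exact c.trans ih shifted

variable {c : AddCon ℕ} {x a b : ℕ}

theorem rel_add_of_dvd (h : c x (x + a)) (hab : a ∣ b) : c x (x + b) := by
  obtain ⟨t, rfl⟩ := hab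
  simpa [mul_comm] using c.rel_add_nsmul h t

theorem rel_add_sub (ha : c x (x + a)) (hb : c x (x + b)) (hab : a ≤ b) :
    c x (x + (b - a)) := by
  have shifted : c (x + (b - a)) (x + b) := by
    convert c.add (c.refl (b - a)) ha using 1 <;> omega
  exact c.trans hb (c.symm shifted)

theorem rel_add_mod (ha : c x (x + a)) (hb : c x (x + b)) : c x (x + b % a) := by
  rw [Nat.mod_eq_sub_mul_div]
  exact rel_add_sub (rel_add_of_dvd ha (dvd_mul_right a _)) hb (Nat.mul_div_le b a)

theorem rel_add_gcd (ha : c x (x + a)) (hb : c x (x + b)) : c x (x + Nat.gcd a b) := by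
  induction a, b using Nat.gcd.induction with
  | H0 b => simpa using hb
  | H1 a b _ ih => rw [Nat.gcd_rec]; exact ih (rel_add_mod ha hb) ha

end AddCon

/-- Let `M` be the commutative monoid presented by one generator `a` and relations
`a = m·a` and `a = n·a`, where `m, n ≥ 2`, and let `d = gcd(m−1, n−1)`.  Then `M` is
isomorphic to the monoid presented by one generator and the single relation
`a = (d+1)·a`: the additive congruence on `ℕ` generated by `{(1, m), (1, n)}` equals
the congruence generated by `(1, d+1)`. -/
theorem stmt_17 (m n : ℕ) (hm : 2 ≤ m) (hn : 2 ≤ n) :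
    addConGen (fun a b : ℕ => (a = 1 ∧ b = m) ∨ (a = 1 ∧ b = n)) =
      addConGen (fun a b : ℕ => a = 1 ∧ b = Nat.gcd (m - 1) (n - 1) + 1) := by
  obtain ⟨a, rfl⟩ : ∃ a, m = 1 + a := ⟨m - 1, by omega⟩
  obtain ⟨b, rfl⟩ : ∃ b, n = 1 + b := ⟨n - 1, by omega⟩
  simp only [Nat.add_sub_cancel_left]
  apply le_antisymm
  · have hgcd : addConGen (fun u v : ℕ => u = 1 ∧ v = Nat.gcd a b + 1) 1 (1 + Nat.gcd a b) :=
      .of _ _ ⟨rfl, add_comm _ _⟩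
    refine AddCon.addConGen_le.mpr ?_
    rintro _ _ (⟨rfl, rfl⟩ | ⟨rfl, rfl⟩)
    · exact AddCon.rel_add_of_dvd hgcd (Nat.gcd_dvd_left a b)
    · exact AddCon.rel_add_of_dvd hgcd (Nat.gcd_dvd_right a b)
  · refine AddCon.addConGen_le.mpr ?_
    rintro _ _ ⟨rfl, rfl⟩
    rw [add_comm (Nat.gcd a b)]
    apply AddCon.rel_add_gcd <;> apply AddConGen.Rel.of <;> simp
end

section
/- Let φ be a state on a unital C*-algebra A, P a projection, and suppose p ≤ P is a projection with v ∈ A satisfying v*v = p, vv* = q ≤ 1 − p, and φ(vx) = λ φ(xv) for all x ∈ A with λ > 0. Let Φ_A: A → C be a positive map with Φ_A(c·x) = c·Φ_A(x) for central c ∈ C and φ = γ∘Φ_A for a faithful state γ on C, where PC = Pℂ. Then Φ_A(p a (1−p)) = 0 for all a ∈ A. -/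
/-!
The modular relation gives `λ φ((1-p) b p) = φ(v (1-p) b v*) = 0`, since `v (1-p) = 0` for the
partial isometry `v`; as `φ` is hermitian, `φ(x) = 0` for `x = p a (1-p)` too. Because `P x = x`,
the positive elements
`(1-P) Φ((nP + x)* (nP + x)) (1-P) = n (1-P) Φ(x + x*) (1-P) + (1-P) Φ(x* x) (1-P)`, `n ∈ ℤ`,
force `(1-P) Φ(x + x*) (1-P) = 0`; applied to `ix` as well, this gives `(1-P) Φ(x) (1-P) = 0`.
Together with `P Φ(x) = Φ(x) P = zP` we get `Φ(x) = zP`, and `0 = φ(x) = z γ(P)` with `γ`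
faithful yields `Φ(x) = 0`.
-/

open scoped ComplexOrder

section
variable {R M : Type*} [Ring R] [StarRing R] [Algebra ℂ R] [StarModule ℂ R]
  [AddCommGroup M] [StarAddMonoid M] [Module ℂ M] [StarModule ℂ M]

theorem LinearMap.map_star_of_isSelfAdjoint_map_star_mul_self (f : R →ₗ[ℂ] M)
    (hf : ∀ x, IsSelfAdjoint (f (star x * x))) (x : R) : f (star x) = star (f x) := by
  have hre : IsSelfAdjoint (f (x + star x)) := by
    have : x + star x = star (1 + x) * (1 + x) - star x * x - star 1 * 1 := by
      simp only [star_add, star_one]; noncomm_ring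
    rw [this, map_sub, map_sub]
    exact ((hf _).sub (hf _)).sub (hf _)
  have him : IsSelfAdjoint (f (Complex.I • (x - star x))) := by
    have : Complex.I • (x - star x)
        = star (1 + Complex.I • x) * (1 + Complex.I • x) - star x * x - star 1 * 1 := by
      simp only [star_add, star_one, star_smul, Complex.star_def, Complex.conj_I, add_mul,
        mul_add, one_mul, mul_one, smul_mul_assoc, mul_smul_comm]
      match_scalars <;> simp
    rw [this, map_sub, map_sub]
    exact ((hf _).sub (hf _)).sub (hf _)
  rw [IsSelfAdjoint, map_add, star_add] at hre
  rw [IsSelfAdjoint, map_smul, map_sub, star_smul, star_sub, Complex.star_def,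
    Complex.conj_I, neg_smul, ← smul_neg, neg_sub] at him
  have him' := smul_right_injective M Complex.I_ne_zero him
  linear_combination (norm := module) (-1/2 : ℂ) • (hre - him')
end

theorem mul_star_mul_self_of_isIdempotentElem {E : Type*} [NonUnitalNormedRing E] [StarRing E]
    [CStarRing E] {v : E} (hv : IsIdempotentElem (star v * v)) : v * (star v * v) = v := by
  rw [← sub_eq_zero, ← CStarRing.star_mul_self_eq_zero_iff]
  have : star (v * (star v * v) - v) * (v * (star v * v) - v)
      = (star v * v) * (star v * v) * (star v * v) - (star v * v) * (star v * v)
        - (star v * v) * (star v * v) + star v * v := by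
    simp only [star_sub, star_mul, star_star]; noncomm_ring
  rw [this, hv.eq, hv.eq]; abel

theorem apply_one_sub_mul_mul_eq_zero_of_modular {A : Type*} [Ring A] [Star A] {f : A → ℂ}
    (hf0 : f 0 = 0) {v p : A} (hvv : star v * v = p) (hvp : v * p = v) {lam : ℝ}
    (hlam : lam ≠ 0) (hmod : ∀ x, f (v * x) = lam • f (x * v)) (b : A) :
    f ((1 - p) * b * p) = 0 := by
  have hv : v * (1 - p) = 0 := by rw [mul_sub, mul_one, hvp, sub_self]
  have h := hmod ((1 - p) * b * star v)
  rw [← mul_assoc, ← mul_assoc, hv, zero_mul, zero_mul, hf0, mul_assoc _ (star v), hvv] at h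
  exact (smul_eq_zero.mp h.symm).resolve_left hlam

theorem eq_smul_of_mul_eq_smul {R : Type*} [Ring R] [Algebra ℂ R] {P c : R}
    (hP : IsIdempotentElem P) {z : ℂ} (hPc : P * c = z • P) (hcP : c * P = z • P)
    (hc : (1 - P) * c * (1 - P) = 0) : c = z • P := by
  have : (1 - P) * c = 0 := by
    rw [← hc, mul_sub (_ * c), mul_one, mul_assoc, hcP, mul_smul_comm, hP.one_sub_mul_self,
      smul_zero, sub_zero]
  rw [← sub_eq_zero, ← this, ← hPc]; noncomm_ring

section CStarAlgebra
variable {A : Type*} [CStarAlgebra A] [PartialOrder A] [StarOrderedRing A]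

theorem eq_zero_of_forall_zsmul_add_nonneg {w r : A} (h : ∀ n : ℤ, 0 ≤ n • w + r) : w = 0 := by
  have hbound : ∀ n : ℕ, n * ‖w‖ ≤ 3 * ‖r‖ := by
    intro n
    have hle : (n : ℤ) • w + r ≤ 2 • r := by
      rw [← sub_nonneg]
      convert h (-n) using 1
      rw [two_smul, neg_smul]; abel
    have hnorm := CStarAlgebra.norm_le_norm_of_nonneg_of_le (h n) hle
    rw [natCast_zsmul] at hnorm
    calc n * ‖w‖ = ‖n • w‖ := by rw [RCLike.norm_nsmul ℂ, nsmul_eq_mul]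
      _ ≤ ‖n • w + r‖ + ‖r‖ := norm_le_add_norm_add _ _
      _ ≤ ‖2 • r‖ + ‖r‖ := by gcongr
      _ ≤ 3 * ‖r‖ := by rw [RCLike.norm_nsmul ℂ, nsmul_eq_mul]; norm_num; linarith
  by_contra hw
  obtain ⟨n, hn⟩ := exists_nat_gt (3 * ‖r‖ / ‖w‖)
  rw [div_lt_iff₀ (norm_pos_iff.2 hw)] at hn
  linarith [hbound n]

variable {Φ : A →ₗ[ℂ] A} {P : A}

theorem one_sub_mul_map_add_star_mul_one_sub_eq_zero (hΦ : ∀ a, 0 ≤ Φ (star a * a))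
    (hP : IsStarProjection P) (hΦP : Φ P = P) {y : A} (hy : P * y = y) :
    (1 - P) * Φ (y + star y) * (1 - P) = 0 := by
  have hyP : star y * P = star y := by
    simpa [hP.isSelfAdjoint.star_eq] using congr(star $hy)
  refine eq_zero_of_forall_zsmul_add_nonneg (r := (1 - P) * Φ (star y * y) * (1 - P)) fun n ↦ ?_
  have hexp : star (n • P + y) * (n • P + y) = (n * n) • P + n • (y + star y) + star y * y := by
    simp only [star_add, star_zsmul, hP.isSelfAdjoint.star_eq, add_mul, mul_add, smul_mul_assoc,
      mul_smul_comm, hP.isIdempotentElem.eq, hy, hyP, smul_add]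
    module
  have h := star_left_conjugate_nonneg (hΦ (n • P + y)) (1 - P)
  rwa [hexp, map_add, map_add, map_zsmul, map_zsmul, hΦP, hP.one_sub.isSelfAdjoint.star_eq,
    mul_add, mul_add, add_mul, add_mul, mul_smul_comm, smul_mul_assoc, hP.one_sub_mul_self,
    zero_mul, smul_zero, zero_add, mul_smul_comm, smul_mul_assoc] at h

theorem one_sub_mul_map_mul_one_sub_eq_zero (hΦ : ∀ a, 0 ≤ Φ (star a * a))
    (hP : IsStarProjection P) (hΦP : Φ P = P) {y : A} (hy : P * y = y) :
    (1 - P) * Φ y * (1 - P) = 0 := by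
  have hΦstar : ∀ x, Φ (star x) = star (Φ x) :=
    Φ.map_star_of_isSelfAdjoint_map_star_mul_self fun a ↦ .of_nonneg (hΦ a)
  have hstar : star ((1 - P) * Φ y * (1 - P)) = (1 - P) * Φ (star y) * (1 - P) := by
    rw [hΦstar, star_mul, star_mul, hP.one_sub.isSelfAdjoint.star_eq, mul_assoc]
  have hre : (1 - P) * Φ y * (1 - P) + star ((1 - P) * Φ y * (1 - P)) = 0 := by
    rw [hstar]
    simpa only [map_add, mul_add, add_mul] using
      one_sub_mul_map_add_star_mul_one_sub_eq_zero hΦ hP hΦP hy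
  have him : (1 - P) * Φ y * (1 - P) - star ((1 - P) * Φ y * (1 - P)) = 0 := by
    have h := one_sub_mul_map_add_star_mul_one_sub_eq_zero hΦ hP hΦP (y := Complex.I • y)
      (by rw [mul_smul_comm, hy])
    rw [hstar]
    rw [star_smul, Complex.star_def, Complex.conj_I, map_add, map_smul, map_smul] at h
    refine (smul_eq_zero.mp ?_).resolve_left Complex.I_ne_zero
    rw [← h, mul_add, add_mul, mul_smul_comm, mul_smul_comm, smul_mul_assoc, smul_mul_assoc]
    module
  linear_combination (norm := module) (1/2 : ℂ) • (hre + him)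

end CStarAlgebra

theorem stmt_19_general {A : Type*} [CStarAlgebra A]
    (C : StarSubalgebra ℂ A)
    (Φ : A →ₗ[ℂ] A) (hΦmem : ∀ a, Φ a ∈ C) (hΦC : ∀ c ∈ C, Φ c = c)
    (hΦpos : ∀ a, ∃ b, Φ (star a * a) = star b * b)
    (γ : A →ₗ[ℂ] ℂ)
    (hγpos : ∀ c ∈ C, 0 ≤ γ (star c * c))
    (hγfaithful : ∀ c ∈ C, γ (star c * c) = 0 → c = 0)
    (φ : A → ℂ) (hφ : ∀ a, φ a = γ (Φ a))
    (P : A) (hPmem : P ∈ C) (hPidem : IsIdempotentElem P) (hPsa : star P = P)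
    (hPcentral : ∀ c ∈ C, P * c = c * P)
    (hPC : ∀ c ∈ C, ∃ z : ℂ, P * c = z • P)
    (p v : A) (hpidem : IsIdempotentElem p)
    (hpP : p * P = p)
    (hvv : star v * v = p)
    (lam : ℝ) (hlam : 0 < lam) (hvmod : ∀ x, φ (v * x) = lam • φ (x * v)) :
    ∀ a : A, Φ (p * a * (1 - p)) = 0 := by
  let _ := CStarAlgebra.spectralOrder A
  have _ := CStarAlgebra.spectralOrderedRing A
  have hΦnonneg (a : A) : 0 ≤ Φ (star a * a) := by
    obtain ⟨b, hb⟩ := hΦpos a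
    exact hb ▸ star_mul_self_nonneg b
  have hφstar (y : A) : φ (star y) = star (φ y) := by
    rw [hφ, hφ, Φ.map_star_of_isSelfAdjoint_map_star_mul_self fun a ↦ .of_nonneg (hΦnonneg a)]
    exact (γ ∘ₗ C.subtype.toLinearMap).map_star_of_isSelfAdjoint_map_star_mul_self
      (fun c ↦ .of_nonneg (hγpos c c.2)) ⟨Φ y, hΦmem y⟩
  have hpsa : star p = p := by rw [← hvv, star_mul, star_star]
  have hvp : v * p = v := hvv ▸ mul_star_mul_self_of_isIdempotentElem (hvv ▸ hpidem)
  intro a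
  have hφx : γ (Φ (p * a * (1 - p))) = 0 := by
    have hx : p * a * (1 - p) = star ((1 - p) * star a * p) := by
      simp only [star_mul, star_sub, star_one, star_star, hpsa, mul_assoc]
    rw [← hφ, hx, hφstar, apply_one_sub_mul_mul_eq_zero_of_modular (by simp [hφ]) hvv hvp
      hlam.ne' hvmod, star_zero]
  have hPp : P * p = p := by simpa [hpsa, hPsa] using congr(star $hpP)
  have hPx : P * (p * a * (1 - p)) = p * a * (1 - p) := by rw [← mul_assoc, ← mul_assoc, hPp]
  obtain ⟨z, hz⟩ := hPC _ (hΦmem (p * a * (1 - p)))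
  have hΦx := eq_smul_of_mul_eq_smul hPidem hz (hPcentral _ (hΦmem _) ▸ hz)
    (one_sub_mul_map_mul_one_sub_eq_zero hΦnonneg ⟨hPidem, hPsa⟩ (hΦC P hPmem) hPx)
  rw [hΦx, map_smul, smul_eq_mul, mul_eq_zero] at hφx
  rcases hφx with hz0 | hγP
  · rw [hΦx, hz0, zero_smul]
  · rw [hΦx, hγfaithful P hPmem (by rwa [hPsa, hPidem.eq]), smul_zero]

/-- Let `φ` be a state on a unital C*-algebra `A`, `P` a projection, and suppose `p ≤ P`
is a projection with `v ∈ A` satisfying `v*v = p`, `vv* = q ≤ 1 − p`, and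
`φ(vx) = λ·φ(xv)` for all `x` with `λ > 0`.  Let `Φ_A : A → C` be a positive linear map
onto a subalgebra `C` satisfying `Φ_A(c·x) = c·Φ_A(x)` for central `c ∈ C`, with
`φ = γ ∘ Φ_A` for a faithful state `γ` on `C`, where `PC = Pℂ`.  Then
`Φ_A(p·a·(1−p)) = 0` for all `a ∈ A`. -/
theorem stmt_19 {A : Type*} [CStarAlgebra A]
    (C : StarSubalgebra ℂ A)
    (Φ : A →ₗ[ℂ] A) (hΦmem : ∀ a, Φ a ∈ C) (hΦC : ∀ c ∈ C, Φ c = c)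
    (hΦpos : ∀ a, ∃ b, Φ (star a * a) = star b * b)
    (hΦmod : ∀ c ∈ C, (∀ a : A, c * a = a * c) → ∀ x, Φ (c * x) = c * Φ x)
    (γ : A →ₗ[ℂ] ℂ) (hγ1 : γ 1 = 1)
    (hγpos : ∀ c ∈ C, 0 ≤ γ (star c * c))
    (hγfaithful : ∀ c ∈ C, γ (star c * c) = 0 → c = 0)
    (φ : A → ℂ) (hφ : ∀ a, φ a = γ (Φ a))
    (P : A) (hPmem : P ∈ C) (hPidem : IsIdempotentElem P) (hPsa : star P = P)
    (hPcentral : ∀ c ∈ C, P * c = c * P)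
    (hPC : ∀ c ∈ C, ∃ z : ℂ, P * c = z • P)
    (p q v : A) (hpidem : IsIdempotentElem p) (hpsa : star p = p)
    (hpP : p * P = p)
    (hvv : star v * v = p) (hvq : v * star v = q)
    (hq1p : q * (1 - p) = q)
    (lam : ℝ) (hlam : 0 < lam) (hvmod : ∀ x, φ (v * x) = lam • φ (x * v)) :
    ∀ a : A, Φ (p * a * (1 - p)) = 0 :=
  stmt_19_general C Φ hΦmem hΦC hΦpos γ hγpos hγfaithful φ hφ P hPmem hPidem hPsa hPcentral hPC p v
    hpidem hpP hvv lam hlam hvmod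
end
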